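/- arXiv:1902.10254 — 7 statements merged into one kernel-verified Lean document; each statement's English description precedes it below -/
import Mathlib

section
/- Let M ≥ 1, let A be a Hermitian M×M complex matrix, let τ > 0 and λ ∈ ℝ. Suppose a sequence R : ℕ → ℂ^M satisfies, for every n ≥ 0, the implicit time-stepping scheme i·(R^{n+1} − R^n) = τ·( A·R^{n+1/2} + (λ/2)·N^n ) where R^{n+1/2} = (R^{n+1} + R^n)/2 and N^n is the vector with components N^n_j = (|R^n_j|² + |R^{n+1}_j|²)·R^{n+1/2}_j. Then the discrete mass 𝓜^n := Σ_j |R^n_j|² is conserved: 𝓜^n = 𝓜^0 for all n ≥ 1. -/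
/-!
Each step of the scheme is the implicit midpoint rule `i (u - v) = B m`, `m = (u + v) / 2`, for the
Hermitian matrix `B = τ (A + diag c)`, where the cubic term only contributes the real weights
`c j = λ/2 (|v j|² + |u j|²)`. Pairing with `m` gives `Im ⟪m, i (u - v)⟫ = (‖u‖² - ‖v‖²) / 2`,
while `⟪m, B m⟫` is real.
-/

open Finset Complex ComplexConjugate Matrix

theorem Complex.im_conj_midpoint_mul_I_mul_sub (a b : ℂ) :
    (conj ((a + b) / 2) * (I * (a - b))).im = (‖a‖ ^ 2 - ‖b‖ ^ 2) / 2 := by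
  simp only [Complex.sq_norm, normSq_apply, mul_im, mul_re, div_re, div_im, conj_re, conj_im,
    I_re, I_im, sub_re, sub_im, add_re, add_im]
  norm_num
  ring

theorem Matrix.IsHermitian.sum_sq_norm_eq_of_I_mul_sub_eq_mulVec_midpoint {ι : Type*}
    [Fintype ι] {B : Matrix ι ι ℂ} (hB : B.IsHermitian) {u v : ι → ℂ}
    (h : ∀ j, I * (u j - v j) = (B *ᵥ fun k => (u k + v k) / 2) j) :
    ∑ j, ‖u j‖ ^ 2 = ∑ j, ‖v j‖ ^ 2 := by
  set m : ι → ℂ := fun k => (u k + v k) / 2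
  have hpair : ∑ j, conj (m j) * (I * (u j - v j)) = star m ⬝ᵥ B *ᵥ m := by
    simp only [h, dotProduct, Pi.star_apply, RCLike.star_def]
  have him := congrArg Complex.im hpair
  rw [im_sum] at him
  simp only [m, Complex.im_conj_midpoint_mul_I_mul_sub, ← sum_div, sum_sub_distrib] at him
  have hreal := hB.im_star_dotProduct_mulVec_self m
  rw [RCLike.im_to_complex] at hreal
  linarith

theorem Matrix.IsHermitian.smul_add_diagonal_ofReal {ι : Type*} [Fintype ι] [DecidableEq ι]
    {A : Matrix ι ι ℂ} (hA : A.IsHermitian) (τ : ℝ) (c : ι → ℝ) :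
    ((τ : ℂ) • (A + diagonal fun j => (c j : ℂ))).IsHermitian :=
  (hA.add (isHermitian_diagonal_iff.mpr fun _ => conj_ofReal _)).smul (conj_ofReal τ)

theorem mass_conservation_cubic_scheme_general
    (M : ℕ)
    (A : Matrix (Fin M) (Fin M) ℂ) (hA : A.IsHermitian)
    (τ lam : ℝ)
    (R : ℕ → EuclideanSpace ℂ (Fin M))
    (hscheme : ∀ n : ℕ, ∀ j : Fin M,
      Complex.I * (R (n+1) j - R n j) =
        (τ : ℂ) * (A.mulVec (fun k => (R (n+1) k + R n k) / 2) j
          + ((lam : ℂ)/2) *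
              ((((‖R n j‖)^2 + (‖R (n+1) j‖)^2 : ℝ)) : ℂ)
              * ((R (n+1) j + R n j) / 2))) :
    ∀ n : ℕ, 1 ≤ n →
      ∑ j, (‖R n j‖)^2 = ∑ j, (‖R 0 j‖)^2 := by
  have step (n : ℕ) : ∑ j, ‖R (n + 1) j‖ ^ 2 = ∑ j, ‖R n j‖ ^ 2 :=
    (hA.smul_add_diagonal_ofReal τ fun j => lam / 2 * (‖R n j‖ ^ 2 + ‖R (n + 1) j‖ ^ 2))
      |>.sum_sq_norm_eq_of_I_mul_sub_eq_mulVec_midpoint fun j => by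
        simp only [hscheme n j, smul_mulVec, add_mulVec, Pi.smul_apply, Pi.add_apply,
          mulVec_diagonal, smul_eq_mul]
        push_cast
        ring
  exact fun n _ => Nat.rec rfl (fun k ih => (step k).trans ih) n

/-- Mass conservation for the implicit midpoint-type scheme for the cubic NLS,
fully discrete in space with a Hermitian matrix `A` representing `-Δ`. -/
theorem mass_conservation_cubic_scheme
    (M : ℕ) (hM : 1 ≤ M)
    (A : Matrix (Fin M) (Fin M) ℂ) (hA : A.IsHermitian)
    (τ lam : ℝ) (hτ : 0 < τ)
    (R : ℕ → EuclideanSpace ℂ (Fin M))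
    (hscheme : ∀ n : ℕ, ∀ j : Fin M,
      Complex.I * (R (n+1) j - R n j) =
        (τ : ℂ) * (A.mulVec (fun k => (R (n+1) k + R n k) / 2) j
          + ((lam : ℂ)/2) *
              ((((‖R n j‖)^2 + (‖R (n+1) j‖)^2 : ℝ)) : ℂ)
              * ((R (n+1) j + R n j) / 2))) :
    ∀ n : ℕ, 1 ≤ n →
      ∑ j, (‖R n j‖)^2 = ∑ j, (‖R 0 j‖)^2 :=
  mass_conservation_cubic_scheme_general M A hA τ lam R hscheme
end

section
/- Let M ≥ 1, let A be a Hermitian M×M complex matrix, let τ > 0 and λ ∈ ℝ. Suppose a sequence R : ℕ → ℂ^M satisfies, for every n ≥ 0, the implicit time-stepping scheme i·(R^{n+1} − R^n) = τ·( A·R^{n+1/2} + (λ/2)·N^n ) where R^{n+1/2} = (R^{n+1} + R^n)/2 and N^n_j = (|R^n_j|² + |R^{n+1}_j|²)·R^{n+1/2}_j. Then the discrete energy 𝓗^n := (1/2)·Re⟨A·R^n, R^n⟩ + (λ/4)·Σ_j |R^n_j|⁴ is conserved: 𝓗^n = 𝓗^0 for all n ≥ 1. -/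
/-!
Pair the scheme with `δ = Rⁿ⁺¹ - Rⁿ` and take real parts. The left side `Re ⟨δ, i δ⟩` vanishes.
On the right, Hermitian symmetry of `A` turns `Re ⟨δ, A (Rⁿ⁺¹ + Rⁿ) / 2⟩` into the increment of
the quadratic energy, and in each component the averaged nonlinearity contributes
`(|a|² + |b|²)(|b|² - |a|²) / 2 = (|b|⁴ - |a|⁴) / 2`. Hence `τ` times the energy increment is zero.
-/

open Matrix ComplexConjugate

section

variable {ι : Type*} [Fintype ι]

theorem Matrix.IsHermitian.star_mulVec_dotProduct {A : Matrix ι ι ℂ} (hA : A.IsHermitian)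
    (x y : ι → ℂ) : star (A *ᵥ x) ⬝ᵥ y = star x ⬝ᵥ A *ᵥ y := by
  rw [star_mulVec, hA.eq, dotProduct_mulVec]

theorem Matrix.IsHermitian.re_star_dotProduct_mulVec_comm {A : Matrix ι ι ℂ} (hA : A.IsHermitian)
    (x y : ι → ℂ) : (star x ⬝ᵥ A *ᵥ y).re = (star y ⬝ᵥ A *ᵥ x).re := by
  rw [star_dotProduct, hA.star_mulVec_dotProduct, Complex.star_def, Complex.conj_re]

theorem Matrix.IsHermitian.re_star_sub_dotProduct_mulVec_add {A : Matrix ι ι ℂ}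
    (hA : A.IsHermitian) (u v : ι → ℂ) :
    (star (v - u) ⬝ᵥ A *ᵥ (v + u)).re = (star v ⬝ᵥ A *ᵥ v).re - (star u ⬝ᵥ A *ᵥ u).re := by
  have hcross := hA.re_star_dotProduct_mulVec_comm v u
  simp only [star_sub, sub_dotProduct, mulVec_add, dotProduct_add, Complex.sub_re,
    Complex.add_re] at hcross ⊢
  linarith

theorem Complex.re_conj_sub_mul_add (a b : ℂ) :
    (conj (b - a) * (b + a)).re = ‖b‖ ^ 2 - ‖a‖ ^ 2 := by
  simp only [Complex.sq_norm, Complex.normSq_apply, Complex.mul_re, Complex.conj_re,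
    Complex.conj_im, Complex.sub_re, Complex.sub_im, Complex.add_re, Complex.add_im]
  ring

noncomputable def cubicEnergy (A : Matrix ι ι ℂ) (lam : ℝ) (u : ι → ℂ) : ℝ :=
  (1/2 : ℝ) * (star (A *ᵥ u) ⬝ᵥ u).re + (lam/4) * ∑ j, ‖u j‖^4

noncomputable def cubicSchemeField (A : Matrix ι ι ℂ) (lam : ℝ) (u v : ι → ℂ) (j : ι) : ℂ :=
  (A *ᵥ fun k => (v k + u k) / 2) j
    + ((lam : ℂ)/2) * (((‖u j‖^2 + ‖v j‖^2 : ℝ)) : ℂ) * ((v j + u j) / 2)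

def IsCubicSchemeStep (A : Matrix ι ι ℂ) (τ lam : ℝ) (u v : ι → ℂ) : Prop :=
  ∀ j, Complex.I * (v j - u j) = (τ : ℂ) * cubicSchemeField A lam u v j

theorem re_conj_sub_mul_cubicTerm (lam : ℝ) (a b : ℂ) :
    (conj (b - a) * (((lam : ℂ)/2) * (((‖a‖^2 + ‖b‖^2 : ℝ)) : ℂ) * ((b + a) / 2))).re
      = lam / 4 * (‖b‖ ^ 4 - ‖a‖ ^ 4) := by
  have hfactor : conj (b - a) * (((lam : ℂ)/2) * (((‖a‖^2 + ‖b‖^2 : ℝ)) : ℂ) * ((b + a) / 2))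
      = ((lam / 4 * (‖a‖^2 + ‖b‖^2) : ℝ) : ℂ) * (conj (b - a) * (b + a)) := by
    push_cast; ring
  rw [hfactor, Complex.re_ofReal_mul, Complex.re_conj_sub_mul_add]
  ring

theorem Matrix.IsHermitian.cubicEnergy_sub {A : Matrix ι ι ℂ} (hA : A.IsHermitian) (lam : ℝ)
    (u v : ι → ℂ) :
    cubicEnergy A lam v - cubicEnergy A lam u =
      (star (v - u) ⬝ᵥ cubicSchemeField A lam u v).re := by
  have hmid : (fun k => (v k + u k) / 2) = (1/2 : ℝ) • (v + u) := by
    ext k; simp only [Pi.smul_apply, Pi.add_apply, Complex.real_smul]; push_cast; ring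
  have hfield : cubicSchemeField A lam u v = (1/2 : ℝ) • A *ᵥ (v + u)
      + fun j => ((lam : ℂ)/2) * (((‖u j‖^2 + ‖v j‖^2 : ℝ)) : ℂ) * ((v j + u j) / 2) := by
    ext j; simp only [cubicSchemeField, hmid, mulVec_smul]; rfl
  have hquartic : (star (v - u) ⬝ᵥ fun j =>
      ((lam : ℂ)/2) * (((‖u j‖^2 + ‖v j‖^2 : ℝ)) : ℂ) * ((v j + u j) / 2)).re
      = lam / 4 * (∑ j, ‖v j‖ ^ 4 - ∑ j, ‖u j‖ ^ 4) := by
    simp only [dotProduct, Complex.re_sum, Pi.star_apply, Pi.sub_apply, Complex.star_def,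
      re_conj_sub_mul_cubicTerm, ← Finset.mul_sum, Finset.sum_sub_distrib]
  rw [hfield, dotProduct_add, dotProduct_smul, Complex.add_re, Complex.smul_re,
    hA.re_star_sub_dotProduct_mulVec_add, hquartic, cubicEnergy, cubicEnergy,
    hA.star_mulVec_dotProduct, hA.star_mulVec_dotProduct, smul_eq_mul]
  ring

theorem IsCubicSchemeStep.cubicEnergy_eq {A : Matrix ι ι ℂ} (hA : A.IsHermitian) {τ lam : ℝ}
    (hτ : τ ≠ 0) {u v : ι → ℂ} (hstep : IsCubicSchemeStep A τ lam u v) :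
    cubicEnergy A lam v = cubicEnergy A lam u := by
  have hpaired : star (v - u) ⬝ᵥ (Complex.I • (v - u))
      = (τ : ℂ) * (star (v - u) ⬝ᵥ cubicSchemeField A lam u v) := by
    rw [← smul_eq_mul, ← dotProduct_smul]
    exact congrArg _ (funext hstep)
  have hnormSq : (star (v - u) ⬝ᵥ (v - u)).im = 0 :=
    Complex.conj_eq_iff_im.mp (star_dotProduct (v - u) (v - u)).symm
  have himag : (star (v - u) ⬝ᵥ (Complex.I • (v - u))).re = 0 := by
    rw [dotProduct_smul, smul_eq_mul, Complex.mul_re, Complex.I_re, Complex.I_im, hnormSq]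
    ring
  rw [hpaired, Complex.re_ofReal_mul] at himag
  rw [← sub_eq_zero, hA.cubicEnergy_sub]
  exact (mul_eq_zero.mp himag).resolve_left hτ

end

theorem energy_conservation_cubic_scheme_general
    (M : ℕ)
    (A : Matrix (Fin M) (Fin M) ℂ) (hA : A.IsHermitian)
    (τ lam : ℝ) (hτ : 0 < τ)
    (R : ℕ → EuclideanSpace ℂ (Fin M))
    (hscheme : ∀ n : ℕ, ∀ j : Fin M,
      Complex.I * (R (n+1) j - R n j) =
        (τ : ℂ) * (A.mulVec (fun k => (R (n+1) k + R n k) / 2) j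
          + ((lam : ℂ)/2) *
              (((‖R n j‖^2 + ‖R (n+1) j‖^2 : ℝ)) : ℂ)
              * ((R (n+1) j + R n j) / 2))) :
    ∀ n : ℕ, 1 ≤ n →
      (1/2 : ℝ) * (∑ j, (starRingEnd ℂ) (A.mulVec (fun k => R n k) j) * R n j).re
          + (lam/4) * ∑ j, ‖R n j‖^4
        = (1/2 : ℝ) * (∑ j, (starRingEnd ℂ) (A.mulVec (fun k => R 0 k) j) * R 0 j).re
          + (lam/4) * ∑ j, ‖R 0 j‖^4 := by
  have hconserved : ∀ n, cubicEnergy A lam (R n) = cubicEnergy A lam (R 0) := by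
    intro n
    induction n with
    | zero => rfl
    | succ n ih =>
      have hstep : IsCubicSchemeStep A τ lam (R n) (R (n + 1)) := hscheme n
      exact (hstep.cubicEnergy_eq hA hτ.ne').trans ih
  exact fun n _ => hconserved n

/-- Energy conservation for the implicit midpoint-type scheme for the cubic NLS,
fully discrete in space with a Hermitian matrix `A` representing `-Δ`.
The discrete energy is `(1/2)·Re⟨A·Rⁿ, Rⁿ⟩ + (λ/4)·Σ_j |Rⁿ_j|⁴`, where the standard
Hermitian inner product is written out as `⟨x, y⟩ = Σ_j conj(x_j)·y_j`. -/
theorem energy_conservation_cubic_scheme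
    (M : ℕ) (hM : 1 ≤ M)
    (A : Matrix (Fin M) (Fin M) ℂ) (hA : A.IsHermitian)
    (τ lam : ℝ) (hτ : 0 < τ)
    (R : ℕ → EuclideanSpace ℂ (Fin M))
    (hscheme : ∀ n : ℕ, ∀ j : Fin M,
      Complex.I * (R (n+1) j - R n j) =
        (τ : ℂ) * (A.mulVec (fun k => (R (n+1) k + R n k) / 2) j
          + ((lam : ℂ)/2) *
              (((‖R n j‖^2 + ‖R (n+1) j‖^2 : ℝ)) : ℂ)
              * ((R (n+1) j + R n j) / 2))) :
    ∀ n : ℕ, 1 ≤ n →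
      (1/2 : ℝ) * (∑ j, (starRingEnd ℂ) (A.mulVec (fun k => R n k) j) * R n j).re
          + (lam/4) * ∑ j, ‖R n j‖^4
        = (1/2 : ℝ) * (∑ j, (starRingEnd ℂ) (A.mulVec (fun k => R 0 k) j) * R 0 j).re
          + (lam/4) * ∑ j, ‖R 0 j‖^4 :=
  energy_conservation_cubic_scheme_general M A hA τ lam hτ R hscheme
end

section
/- Let M ≥ 1, let A be a Hermitian M×M complex matrix, let τ > 0 and λ ∈ ℝ. Let F : ℝ → ℝ and G : ℝ → ℝ → ℝ satisfy the divided-difference property G(a,b)·(a − b) = F(a) − F(b) for all a, b ∈ ℝ. Suppose a sequence R : ℕ → ℂ^M satisfies, for every n ≥ 0, the scheme i·(R^{n+1} − R^n) = τ·( A·R^{n+1/2} + λ·N^n ) where R^{n+1/2} = (R^{n+1} + R^n)/2 and N^n_j = G(|R^{n+1}_j|², |R^n_j|²)·R^{n+1/2}_j. Then both the discrete mass 𝓜^n_g := Σ_j |R^n_j|² and the discrete energy 𝓗^n_g := Re⟨A·R^n, R^n⟩ + λ·Σ_j F(|R^n_j|²) are conserved: 𝓜^n_g = 𝓜^0_g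 and 𝓗^n_g = 𝓗^0_g for all n ≥ 1. -/
/-!
Write `d = Rⁿ⁺¹ - Rⁿ` and `s = Rⁿ⁺¹ + Rⁿ`. Since `G` is real, the nonlinear term is a real diagonal
matrix applied to `s / 2`, so one step of the scheme reads `i d = (τ / 2) B s` with `B` Hermitian
(`B` depends on the step, which does not matter). Pairing with `s` gives
`Re ⟨s, d⟩ = (τ / 2) Im ⟨s, B s⟩ = 0`, and `Re ⟨s, d⟩` is the mass difference. Pairing with `B s`
gives `Re ⟨B s, d⟩ = (τ / 2) Im ‖B s‖² = 0`, and by the divided-difference property of `G`,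
`Re ⟨B s, d⟩` is the energy difference: `B s` is a discrete gradient of the energy.
-/

open Finset Matrix
open scoped ComplexOrder

section

variable {ι : Type*} [Fintype ι]

namespace Matrix.IsHermitian

variable {A : Matrix ι ι ℂ}

lemma star_mulVec_dotProduct_s3 (hA : A.IsHermitian) (x y : ι → ℂ) :
    star (A *ᵥ x) ⬝ᵥ y = star x ⬝ᵥ A *ᵥ y := by
  rw [star_mulVec, hA.eq, dotProduct_mulVec]

lemma re_star_mulVec_add_dotProduct_sub (hA : A.IsHermitian) (u v : ι → ℂ) :
    (star (A *ᵥ (u + v)) ⬝ᵥ (u - v)).re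
      = (star (A *ᵥ u) ⬝ᵥ u).re - (star (A *ᵥ v) ⬝ᵥ v).re := by
  have hcross : (star (A *ᵥ v) ⬝ᵥ u).re = (star (A *ᵥ u) ⬝ᵥ v).re := by
    rw [star_dotProduct, ← hA.star_mulVec_dotProduct_s3]
    exact Complex.conj_re _
  simp only [mulVec_add, star_add, add_dotProduct, dotProduct_sub, Complex.add_re,
    Complex.sub_re, hcross]
  ring

end Matrix.IsHermitian

lemma Complex.re_conj_add_mul_sub (a b : ℂ) :
    (starRingEnd ℂ (a + b) * (a - b)).re = ‖a‖ ^ 2 - ‖b‖ ^ 2 := by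
  simp only [Complex.sq_norm, Complex.normSq_apply, Complex.mul_re, map_add, Complex.add_re,
    Complex.add_im, Complex.conj_re, Complex.conj_im, Complex.sub_re, Complex.sub_im]
  ring

lemma re_star_diagonal_mulVec_add_dotProduct_sub [DecidableEq ι] (g : ι → ℝ) (u v : ι → ℂ) :
    (star (diagonal (fun j => (g j : ℂ)) *ᵥ (u + v)) ⬝ᵥ (u - v)).re
      = ∑ j, g j * (‖u j‖ ^ 2 - ‖v j‖ ^ 2) := by
  simp only [dotProduct, Complex.re_sum, mulVec_diagonal, Pi.star_apply, star_mul',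
    Complex.star_def, Complex.conj_ofReal, mul_assoc, Complex.re_ofReal_mul]
  exact sum_congr rfl fun j _ => by rw [← Complex.re_conj_add_mul_sub]; rfl

lemma re_star_dotProduct_eq_of_I_smul_eq {d z : ι → ℂ} {c : ℝ}
    (h : Complex.I • d = (c : ℂ) • z) (x : ι → ℂ) :
    (star x ⬝ᵥ d).re = c * (star x ⬝ᵥ z).im := by
  simpa [dotProduct_smul] using congrArg (fun y => (star x ⬝ᵥ y).im) h

noncomputable def discreteMass (x : ι → ℂ) : ℝ := ∑ j, ‖x j‖ ^ 2

noncomputable def discreteEnergy (A : Matrix ι ι ℂ) (lam : ℝ) (F : ℝ → ℝ) (x : ι → ℂ) : ℝ :=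
  (star (A *ᵥ x) ⬝ᵥ x).re + lam * ∑ j, F (‖x j‖ ^ 2)

lemma discreteMass_sub_discreteMass (u v : ι → ℂ) :
    discreteMass u - discreteMass v = (star (u + v) ⬝ᵥ (u - v)).re := by
  simp only [discreteMass, dotProduct, Complex.re_sum, ← sum_sub_distrib]
  exact sum_congr rfl fun j _ => (Complex.re_conj_add_mul_sub (u j) (v j)).symm

lemma discreteEnergy_sub_discreteEnergy [DecidableEq ι] {A : Matrix ι ι ℂ} (hA : A.IsHermitian)
    (lam : ℝ) {F : ℝ → ℝ} {G : ℝ → ℝ → ℝ} (hG : ∀ a b, G a b * (a - b) = F a - F b)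
    (u v : ι → ℂ) :
    discreteEnergy A lam F u - discreteEnergy A lam F v
      = (star ((A + diagonal fun j => ((lam * G (‖u j‖ ^ 2) (‖v j‖ ^ 2) : ℝ) : ℂ)) *ᵥ (u + v))
          ⬝ᵥ (u - v)).re := by
  rw [add_mulVec, star_add, add_dotProduct, Complex.add_re,
    hA.re_star_mulVec_add_dotProduct_sub, re_star_diagonal_mulVec_add_dotProduct_sub]
  simp only [discreteEnergy, mul_assoc, hG, ← mul_sum, sum_sub_distrib]
  ring

theorem discreteMass_eq_and_discreteEnergy_eq_of_step {A : Matrix ι ι ℂ} (hA : A.IsHermitian)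
    {τ lam : ℝ} {F : ℝ → ℝ} {G : ℝ → ℝ → ℝ} (hG : ∀ a b, G a b * (a - b) = F a - F b)
    {u v : ι → ℂ}
    (hstep : ∀ j, Complex.I * (u j - v j) =
      τ * ((A *ᵥ fun k => (u k + v k) / 2) j
        + lam * (G (‖u j‖ ^ 2) (‖v j‖ ^ 2) : ℂ) * ((u j + v j) / 2))) :
    discreteMass u = discreteMass v ∧ discreteEnergy A lam F u = discreteEnergy A lam F v := by
  classical
  set B := A + diagonal fun j => ((lam * G (‖u j‖ ^ 2) (‖v j‖ ^ 2) : ℝ) : ℂ)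
  have hB : B.IsHermitian :=
    hA.add (isHermitian_diagonal_of_self_adjoint _ (funext fun j => Complex.conj_ofReal _))
  have h : Complex.I • (u - v) = ((τ / 2 : ℝ) : ℂ) • (B *ᵥ (u + v)) := by
    have hmid : (A *ᵥ fun k => (u k + v k) / 2) = (2⁻¹ : ℂ) • A *ᵥ (u + v) := by
      rw [← mulVec_smul]
      congr 1
      ext k
      simp [div_eq_inv_mul]
    ext j
    rw [Pi.smul_apply, Pi.sub_apply, smul_eq_mul, hstep j, hmid]
    simp only [B, add_mulVec, mulVec_diagonal, Pi.add_apply, Pi.smul_apply, smul_eq_mul]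
    push_cast
    ring
  constructor
  · have hmass := re_star_dotProduct_eq_of_I_smul_eq h (u + v)
    have hquad : (star (u + v) ⬝ᵥ B *ᵥ (u + v)).im = 0 := hB.im_star_dotProduct_mulVec_self _
    rw [← discreteMass_sub_discreteMass, hquad, mul_zero] at hmass
    exact sub_eq_zero.mp hmass
  · have hself : (star (B *ᵥ (u + v)) ⬝ᵥ (B *ᵥ (u + v))).im = 0 :=
      (Complex.nonneg_iff.mp (dotProduct_star_self_nonneg _)).2.symm
    have henergy := re_star_dotProduct_eq_of_I_smul_eq h (B *ᵥ (u + v))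
    rw [hself, mul_zero, ← discreteEnergy_sub_discreteEnergy hA lam hG] at henergy
    exact sub_eq_zero.mp henergy

end

theorem mass_energy_conservation_general_scheme_general
    (M : ℕ)
    (A : Matrix (Fin M) (Fin M) ℂ) (hA : A.IsHermitian)
    (τ lam : ℝ)
    (F : ℝ → ℝ) (G : ℝ → ℝ → ℝ)
    (hG : ∀ a b : ℝ, G a b * (a - b) = F a - F b)
    (R : ℕ → EuclideanSpace ℂ (Fin M))
    (hscheme : ∀ n : ℕ, ∀ j : Fin M,
      Complex.I * (R (n+1) j - R n j) =
        (τ : ℂ) * (A.mulVec (fun k => (R (n+1) k + R n k) / 2) j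
          + (lam : ℂ) *
              ((G (‖R (n+1) j‖^2) (‖R n j‖^2) : ℝ) : ℂ)
              * ((R (n+1) j + R n j) / 2))) :
    ∀ n : ℕ, 1 ≤ n →
      (∑ j, ‖R n j‖^2 = ∑ j, ‖R 0 j‖^2) ∧
      ((∑ j, (starRingEnd ℂ) (A.mulVec (fun k => R n k) j) * R n j).re
          + lam * ∑ j, F (‖R n j‖^2)
        = (∑ j, (starRingEnd ℂ) (A.mulVec (fun k => R 0 k) j) * R 0 j).re
          + lam * ∑ j, F (‖R 0 j‖^2)) := by
  have hconserved : ∀ n, discreteMass (fun k => R n k) = discreteMass (fun k => R 0 k) ∧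
      discreteEnergy A lam F (fun k => R n k) = discreteEnergy A lam F (fun k => R 0 k) := by
    intro n
    induction n with
    | zero => exact ⟨rfl, rfl⟩
    | succ m ih =>
      obtain ⟨hmass, henergy⟩ := discreteMass_eq_and_discreteEnergy_eq_of_step hA hG
        (u := fun k => R (m + 1) k) (v := fun k => R m k) (hscheme m)
      exact ⟨hmass.trans ih.1, henergy.trans ih.2⟩
  exact fun n _ => hconserved n

/-- Mass and energy conservation for the scheme for the Schrödinger equation with a
general nonlinearity `f`, where `F(s) = ∫₀^s f` and `G(a,b) = (F(a) − F(b))/(a − b)`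
(only the divided-difference property `G(a,b)(a−b) = F(a) − F(b)` is used).
The discrete energy is `Re⟨A·Rⁿ, Rⁿ⟩ + λ·Σ_j F(|Rⁿ_j|²)`, with the standard Hermitian
inner product written out as `⟨x, y⟩ = Σ_j conj(x_j)·y_j`. -/
theorem mass_energy_conservation_general_scheme
    (M : ℕ) (hM : 1 ≤ M)
    (A : Matrix (Fin M) (Fin M) ℂ) (hA : A.IsHermitian)
    (τ lam : ℝ) (hτ : 0 < τ)
    (F : ℝ → ℝ) (G : ℝ → ℝ → ℝ)
    (hG : ∀ a b : ℝ, G a b * (a - b) = F a - F b)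
    (R : ℕ → EuclideanSpace ℂ (Fin M))
    (hscheme : ∀ n : ℕ, ∀ j : Fin M,
      Complex.I * (R (n+1) j - R n j) =
        (τ : ℂ) * (A.mulVec (fun k => (R (n+1) k + R n k) / 2) j
          + (lam : ℂ) *
              ((G (‖R (n+1) j‖^2) (‖R n j‖^2) : ℝ) : ℂ)
              * ((R (n+1) j + R n j) / 2))) :
    ∀ n : ℕ, 1 ≤ n →
      (∑ j, ‖R n j‖^2 = ∑ j, ‖R 0 j‖^2) ∧
      ((∑ j, (starRingEnd ℂ) (A.mulVec (fun k => R n k) j) * R n j).re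
          + lam * ∑ j, F (‖R n j‖^2)
        = (∑ j, (starRingEnd ℂ) (A.mulVec (fun k => R 0 k) j) * R 0 j).re
          + lam * ∑ j, F (‖R 0 j‖^2)) :=
  mass_energy_conservation_general_scheme_general M A hA τ lam F G hG R hscheme
end

section
/- Let t₀ ∈ ℝ. Then the modified Crank–Nicolson local truncation error, i.e. the function TE(τ) := (i/τ)·(v(t₀+τ) − v(t₀)) + (1/2)·(w(t₀+τ) + w(t₀)) − (λ/4)·(|v(t₀)|² + |v(t₀+τ)|²)·(v(t₀+τ) + v(t₀)), is O(τ²) as τ → 0⁺, i.e. TE =O[𝓝[>]0] (fun τ => τ²). -/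
/-!
Insert the PDE at `t₀` and `t₀ + τ` to eliminate `w`. What remains is `(i/τ)` times a
third-order Taylor remainder of `v`, `i/2` times a second-order Taylor remainder of `v'`
(each `O(τ²)`), and the product `(|v(t₀+τ)|² - |v(t₀)|²)(v(t₀+τ) - v(t₀))` of two `O(τ)`
increments.
-/

open Filter Topology Asymptotics Set

section Taylor

variable {E : Type*} [NormedAddCommGroup E] [NormedSpace ℝ E]

theorem isBigO_sub_taylorWithinEval_add {f : ℝ → E} {n : ℕ} (hf : ContDiff ℝ (n + 1) f)
    (x₀ : ℝ) :
    (fun τ ↦ f (x₀ + τ) - taylorWithinEval f n univ x₀ (x₀ + τ)) =O[𝓝 0] fun τ ↦ τ ^ (n + 1) := by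
  set c := ((n + 1 : ℝ) * n.factorial)⁻¹ • iteratedDeriv (n + 1) f x₀
  have hsucc : ∀ x, f x - taylorWithinEval f n univ x₀ x =
      (f x - taylorWithinEval f (n + 1) univ x₀ x) + (x - x₀) ^ (n + 1) • c := by
    intro x
    rw [taylorWithinEval_succ, iteratedDerivWithin_univ, smul_smul, mul_comm]
    abel
  have hc : (fun x ↦ (x - x₀) ^ (n + 1) • c) =O[𝓝 x₀] fun x ↦ (x - x₀) ^ (n + 1) :=
    isBigO_of_le' (c := ‖c‖) _ fun x ↦ by rw [norm_smul, mul_comm]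
  have h := (taylor_isLittleO_univ (mod_cast hf)).isBigO.add hc
  refine ((h.congr_left fun x ↦ (hsucc x).symm).comp_tendsto
    ((continuous_const_add x₀).tendsto' 0 x₀ (add_zero x₀))).congr_right fun τ ↦ ?_
  simp

theorem isBigO_sub_taylor_one {f : ℝ → E} (hf : ContDiff ℝ 2 f) (x₀ : ℝ) :
    (fun τ ↦ f (x₀ + τ) - f x₀ - τ • deriv f x₀) =O[𝓝 0] fun τ ↦ τ ^ 2 := by
  refine (isBigO_sub_taylorWithinEval_add (n := 1) hf x₀).congr_left fun τ ↦ ?_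
  simp [taylor_within_apply, sub_sub]

theorem isBigO_sub_taylor_two {f : ℝ → E} (hf : ContDiff ℝ 3 f) (x₀ : ℝ) :
    (fun τ ↦ f (x₀ + τ) - f x₀ - τ • deriv f x₀ - (τ ^ 2 / 2) • deriv (deriv f) x₀)
      =O[𝓝 0] fun τ ↦ τ ^ 3 := by
  refine (isBigO_sub_taylorWithinEval_add (n := 2) hf x₀).congr_left fun τ ↦ ?_
  norm_num [taylor_within_apply, sub_sub, iteratedDeriv_succ, div_eq_inv_mul]

theorem DifferentiableAt.isBigO_add_sub {f : ℝ → E} {x₀ : ℝ} (hf : DifferentiableAt ℝ f x₀) :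
    (fun τ ↦ f (x₀ + τ) - f x₀) =O[𝓝 0] fun τ ↦ τ :=
  (hf.isBigO_sub.comp_tendsto ((continuous_const_add x₀).tendsto' 0 x₀ (add_zero x₀))).congr_right
    fun τ ↦ by simp

end Taylor

theorem isBigO_div_mul_sub_taylor_two {f : ℝ → ℂ} (hf : ContDiff ℝ 3 f) (x₀ : ℝ) (c : ℂ) :
    (fun τ : ℝ ↦ c / τ * (f (x₀ + τ) - f x₀ - τ * deriv f x₀
      - (τ : ℂ) ^ 2 / 2 * deriv (deriv f) x₀)) =O[𝓝 0] fun τ ↦ τ ^ 2 := by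
  have hinv : (fun τ : ℝ ↦ c / τ) =O[𝓝 0] fun τ ↦ τ⁻¹ :=
    isBigO_of_le' (c := ‖c‖) _ fun τ ↦ by simp [div_eq_mul_inv]
  have hrem : (fun τ : ℝ ↦ f (x₀ + τ) - f x₀ - τ * deriv f x₀
      - (τ : ℂ) ^ 2 / 2 * deriv (deriv f) x₀) =O[𝓝 0] fun τ ↦ τ ^ 3 :=
    (isBigO_sub_taylor_two hf x₀).congr_left fun τ ↦ by simp [Complex.real_smul]
  exact (hinv.mul hrem).congr_right fun τ ↦ by
    rcases eq_or_ne τ 0 with rfl | hτ <;> field_simp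

theorem isBigO_normSq_sub_mul_sub {v : ℝ → ℂ} {t₀ : ℝ} (hv : DifferentiableAt ℝ v t₀) :
    (fun τ : ℝ ↦ (((‖v (t₀ + τ)‖ ^ 2 : ℝ) : ℂ) - ((‖v t₀‖ ^ 2 : ℝ) : ℂ)) * (v (t₀ + τ) - v t₀))
      =O[𝓝 0] fun τ ↦ τ ^ 2 := by
  have hnorm : (fun τ : ℝ ↦ ((‖v (t₀ + τ)‖ ^ 2 : ℝ) : ℂ) - ((‖v t₀‖ ^ 2 : ℝ) : ℂ))
      =O[𝓝 0] fun τ ↦ τ := by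
    simpa using Complex.isBigO_ofReal_left.mpr (hv.norm_sq ℝ).isBigO_add_sub
  exact (hnorm.mul hv.isBigO_add_sub).congr_right fun τ ↦ (sq τ).symm

/-- The second-derivative terms cancel, so `dd` is arbitrary; with `dd = v''(t₀)` both brackets on
the right are Taylor remainders. -/
theorem crankNicolson_error_eq {lam τ v₀ v₁ d₀ d₁ w₀ w₁ n₀ n₁ : ℂ} (dd : ℂ) (hτ : τ ≠ 0)
    (h₀ : Complex.I * d₀ = -w₀ + lam * n₀ * v₀) (h₁ : Complex.I * d₁ = -w₁ + lam * n₁ * v₁) :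
    Complex.I / τ * (v₁ - v₀) + 1 / 2 * (w₁ + w₀) - lam / 4 * (n₀ + n₁) * (v₁ + v₀)
      = Complex.I / τ * (v₁ - v₀ - τ * d₀ - τ ^ 2 / 2 * dd)
        - Complex.I / 2 * (d₁ - d₀ - τ * dd) + lam / 4 * ((n₁ - n₀) * (v₁ - v₀)) := by
  field_simp
  linear_combination (4 * τ) * h₀ + (4 * τ) * h₁

theorem crank_nicolson_truncation_error_general
    (lam : ℝ) (v w : ℝ → ℂ)
    (hv : ContDiff ℝ 3 v)
    (hpde : ∀ t : ℝ, Complex.I * deriv v t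
      = -w t + (lam : ℂ) * ((‖v t‖^2 : ℝ) : ℂ) * v t)
    (t₀ : ℝ) :
    (fun τ : ℝ =>
        (Complex.I / (τ : ℂ)) * (v (t₀ + τ) - v t₀)
        + (1/2 : ℂ) * (w (t₀ + τ) + w t₀)
        - ((lam : ℂ)/4) * (((‖v t₀‖^2 + ‖v (t₀ + τ)‖^2 : ℝ)) : ℂ)
            * (v (t₀ + τ) + v t₀))
      =O[𝓝[>] (0 : ℝ)] (fun τ : ℝ => τ^2) := by
  have hlin₁ := isBigO_div_mul_sub_taylor_two hv t₀ Complex.I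
  have hlin₂ : (fun τ : ℝ ↦ Complex.I / 2 *
      (deriv v (t₀ + τ) - deriv v t₀ - τ * deriv (deriv v) t₀)) =O[𝓝 0] fun τ ↦ τ ^ 2 :=
    ((isBigO_sub_taylor_one hv.deriv' t₀).congr_left fun τ ↦ by
      simp [Complex.real_smul]).const_mul_left _
  have hnonlin := (isBigO_normSq_sub_mul_sub (hv.differentiable (by norm_num) t₀)).const_mul_left
    ((lam : ℂ) / 4)
  refine (((hlin₁.sub hlin₂).add hnonlin).mono nhdsWithin_le_nhds).congr' ?_ EventuallyEq.rfl
  filter_upwards [self_mem_nhdsWithin] with τ (hτ : 0 < τ)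
  rw [Complex.ofReal_add, crankNicolson_error_eq (deriv (deriv v) t₀)
    (by exact_mod_cast hτ.ne') (hpde t₀) (hpde (t₀ + τ))]

/-- The local truncation error of the modified Crank–Nicolson scheme for the cubic
nonlinear Schrödinger equation is `O(τ²)` as `τ → 0⁺`. Here `v(t) = u(x₀,t)` and
`w(t) = Δu(x₀,t)` for a smooth solution `u` of `i u_t + Δu = λ|u|²u`. -/
theorem crank_nicolson_truncation_error
    (lam : ℝ) (v w : ℝ → ℂ)
    (hv : ContDiff ℝ 3 v) (hw : ContDiff ℝ 2 w)
    (hpde : ∀ t : ℝ, Complex.I * deriv v t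
      = -w t + (lam : ℂ) * ((‖v t‖^2 : ℝ) : ℂ) * v t)
    (t₀ : ℝ) :
    (fun τ : ℝ =>
        (Complex.I / (τ : ℂ)) * (v (t₀ + τ) - v t₀)
        + (1/2 : ℂ) * (w (t₀ + τ) + w t₀)
        - ((lam : ℂ)/4) * (((‖v t₀‖^2 + ‖v (t₀ + τ)‖^2 : ℝ)) : ℂ)
            * (v (t₀ + τ) + v t₀))
      =O[𝓝[>] (0 : ℝ)] (fun τ : ℝ => τ^2) :=
  crank_nicolson_truncation_error_general lam v w hv hpde t₀
end

section
/- Let t₀ ∈ ℝ. Then the Leapfrog local truncation error, i.e. the function TE(τ) := (i/(2τ))·(v(t₀+τ) − v(t₀−τ)) + (1/4)·(w(t₀+τ) + 2·w(t₀) + w(t₀−τ)) − (λ/8)·( |(v(t₀) + v(t₀−τ))/2|² + |(v(t₀+τ) + v(t₀))/2|² )·(v(t₀+τ) + 2·v(t₀) + v(t₀−τ)), is O(τ²) as τ → 0⁺, i.e. TE =O[𝓝[>]0] (fun τ => τ²). -/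
open Filter Topology Asymptotics Set

/-!
Substituting the equation at `t₀` for `i v'(t₀)`, the truncation error becomes
`i (D_τ v(t₀) - v'(t₀)) + ¼ (w(t₀+τ) - 2 w(t₀) + w(t₀-τ)) - (N(τ) - N(0))`, with `D_τ` the central
difference quotient and `N` the averaged nonlinearity. The first two terms are `O(τ²)` because the
odd (resp. even) terms of the Taylor polynomials at `t₀ ± τ` cancel, and `N` is an even `C²`
function, so its linear Taylor term vanishes.
-/

section Taylor

variable {E : Type*} [NormedAddCommGroup E] [NormedSpace ℝ E] {f : ℝ → E}

theorem taylor_isBigO_univ {n : ℕ} (hf : ContDiff ℝ (n + 1) f) (x₀ : ℝ) :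
    (fun x ↦ f x - taylorWithinEval f n univ x₀ x) =O[𝓝 x₀] fun x ↦ (x - x₀) ^ (n + 1) := by
  have hsucc := (taylor_isLittleO_univ (x₀ := x₀) (n := n + 1) (by exact_mod_cast hf)).isBigO
  have hlast : (fun x ↦ taylorWithinEval f (n + 1) univ x₀ x - taylorWithinEval f n univ x₀ x)
      =O[𝓝 x₀] fun x ↦ (x - x₀) ^ (n + 1) := by
    simp_rw [taylorWithinEval_succ, add_sub_cancel_left]
    exact ((isBigO_refl _ _).const_mul_left _).smul
      (isBigO_const_const _ (one_ne_zero (α := ℝ)) _) |>.congr_right fun x ↦ by simp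
  exact (hsucc.add hlast).congr_left fun x ↦ sub_add_sub_cancel _ _ _

theorem taylor_isBigO_univ_add {n : ℕ} (hf : ContDiff ℝ (n + 1) f) (x₀ : ℝ) :
    (fun h ↦ f (x₀ + h) - taylorWithinEval f n univ x₀ (x₀ + h)) =O[𝓝 0] (· ^ (n + 1)) := by
  simpa [Function.comp_def] using
    (taylor_isBigO_univ hf x₀).comp_tendsto ((continuous_const_add x₀).tendsto' 0 x₀ (add_zero x₀))

theorem taylorWithinEval_one_univ (x₀ x : ℝ) :
    taylorWithinEval f 1 univ x₀ x = f x₀ + (x - x₀) • deriv f x₀ := by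
  simp [taylor_within_apply]

theorem taylorWithinEval_two_univ (x₀ x : ℝ) :
    taylorWithinEval f 2 univ x₀ x =
      f x₀ + (x - x₀) • deriv f x₀ + ((x - x₀) ^ 2 / 2) • deriv (deriv f) x₀ := by
  rw [taylorWithinEval_succ, taylorWithinEval_one_univ, iteratedDerivWithin_univ,
    iteratedDeriv_succ, iteratedDeriv_one]
  module

theorem Asymptotics.IsBigO.comp_neg_pow {F : Type*} [SeminormedAddCommGroup F] {g : ℝ → F} {k : ℕ}
    (hg : g =O[𝓝 0] (· ^ k)) : (fun h ↦ g (-h)) =O[𝓝 0] (· ^ k) :=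
  (hg.comp_tendsto (continuous_neg.tendsto' 0 0 neg_zero)).trans
    (isBigO_of_le _ fun h ↦ by simp [norm_pow])

theorem isBigO_centralDifference_sub_deriv (hf : ContDiff ℝ 3 f) (t : ℝ) :
    (fun h ↦ (2 * h)⁻¹ • (f (t + h) - f (t - h)) - deriv f t) =O[𝓝[≠] 0] (· ^ 2) := by
  have hR := taylor_isBigO_univ_add (n := 2) hf t
  have hodd : (fun h ↦ f (t + h) - f (t - h) - (2 * h) • deriv f t) =O[𝓝 0] (· ^ 3) :=
    (hR.sub hR.comp_neg_pow).congr_left fun h ↦ by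
      simp only [taylorWithinEval_two_univ, ← sub_eq_add_neg, add_sub_cancel_left]
      module
  have hinv : (fun h : ℝ ↦ (2 * h)⁻¹) =O[𝓝[≠] 0] fun h ↦ h⁻¹ :=
    ((isBigO_refl _ _).const_mul_left 2⁻¹).congr_left fun h ↦ (mul_inv 2 h).symm
  refine (hinv.smul (hodd.mono nhdsWithin_le_nhds)).congr' ?_ ?_ <;>
    filter_upwards [self_mem_nhdsWithin] with h (hh : h ≠ 0)
  · rw [smul_sub, smul_smul, inv_mul_cancel₀ (by simpa), one_smul]
  · rw [smul_eq_mul]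
    field_simp

theorem isBigO_secondDifference (hf : ContDiff ℝ 2 f) (t : ℝ) :
    (fun h ↦ f (t + h) - (2 : ℝ) • f t + f (t - h)) =O[𝓝 0] (· ^ 2) := by
  have hR := taylor_isBigO_univ_add (n := 1) hf t
  refine (hR.add hR.comp_neg_pow).congr_left fun h ↦ ?_
  simp only [taylorWithinEval_one_univ, ← sub_eq_add_neg, add_sub_cancel_left]
  module

theorem isBigO_sub_apply_zero_of_even (hf : ContDiff ℝ 2 f) (heven : ∀ h, f (-h) = f h) :
    (fun h ↦ f h - f 0) =O[𝓝 0] (· ^ 2) := by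
  refine ((isBigO_secondDifference hf 0).const_smul_left (2⁻¹ : ℝ)).congr_left fun h ↦ ?_
  simp only [Pi.smul_apply, zero_add, zero_sub, heven]
  module

end Taylor

section LeapfrogNonlinearity

variable (lam : ℝ) (v : ℝ → ℂ) (t₀ : ℝ)

noncomputable def leapfrogNonlinearity (τ : ℝ) : ℂ :=
  ((lam : ℂ) / 8) * (((‖(v t₀ + v (t₀ - τ)) / 2‖ ^ 2 + ‖(v (t₀ + τ) + v t₀) / 2‖ ^ 2 : ℝ)) : ℂ)
    * (v (t₀ + τ) + 2 * v t₀ + v (t₀ - τ))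

theorem leapfrogNonlinearity_zero :
    leapfrogNonlinearity lam v t₀ 0 = lam * ((‖v t₀‖ ^ 2 : ℝ) : ℂ) * v t₀ := by
  simp only [leapfrogNonlinearity, add_zero, sub_zero, add_self_div_two]
  push_cast
  ring

theorem leapfrogNonlinearity_neg (τ : ℝ) :
    leapfrogNonlinearity lam v t₀ (-τ) = leapfrogNonlinearity lam v t₀ τ := by
  simp only [leapfrogNonlinearity, ← sub_eq_add_neg, sub_neg_eq_add]
  rw [add_comm (v t₀) (v (t₀ + τ)), add_comm (v (t₀ - τ)) (v t₀)]
  push_cast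
  ring

variable {v} in
theorem contDiff_leapfrogNonlinearity {n : WithTop ℕ∞} (hv : ContDiff ℝ n v) :
    ContDiff ℝ n (leapfrogNonlinearity lam v t₀) := by
  have hvp : ContDiff ℝ n fun τ ↦ v (t₀ + τ) := hv.comp (contDiff_const.add contDiff_id)
  have hvm : ContDiff ℝ n fun τ ↦ v (t₀ - τ) := hv.comp (contDiff_const.sub contDiff_id)
  refine (contDiff_const.mul (Complex.ofRealCLM.contDiff.comp ?_)).mul
    ((hvp.add contDiff_const).add hvm)
  exact ((contDiff_const.add hvm).div_const 2).norm_sq ℝ |>.add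
    (((hvp.add contDiff_const).div_const 2).norm_sq ℝ)

end LeapfrogNonlinearity

/-- The local truncation error of the Leapfrog scheme for the cubic nonlinear
Schrödinger equation is `O(τ²)` as `τ → 0⁺`. Here `v(t) = u(x₀,t)` and
`w(t) = Δu(x₀,t)` for a smooth solution `u` of `i u_t + Δu = λ|u|²u`. -/
theorem leapfrog_truncation_error
    (lam : ℝ) (v w : ℝ → ℂ)
    (hv : ContDiff ℝ 3 v) (hw : ContDiff ℝ 2 w)
    (hpde : ∀ t : ℝ, Complex.I * deriv v t
      = -w t + (lam : ℂ) * ((‖v t‖^2 : ℝ) : ℂ) * v t)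
    (t₀ : ℝ) :
    (fun τ : ℝ =>
        (Complex.I / (2 * (τ : ℂ))) * (v (t₀ + τ) - v (t₀ - τ))
        + (1/4 : ℂ) * (w (t₀ + τ) + 2 * w t₀ + w (t₀ - τ))
        - ((lam : ℂ)/8) *
            (((‖(v t₀ + v (t₀ - τ)) / 2‖^2
              + ‖(v (t₀ + τ) + v t₀) / 2‖^2 : ℝ)) : ℂ)
            * (v (t₀ + τ) + 2 * v t₀ + v (t₀ - τ)))
      =O[𝓝[>] (0 : ℝ)] (fun τ : ℝ => τ^2) := by
  have hD := (isBigO_centralDifference_sub_deriv hv t₀).mono (nhdsGT_le_nhdsNE 0)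
  have hW := (isBigO_secondDifference hw t₀).mono (nhdsWithin_le_nhds (s := Ioi 0))
  have hN := isBigO_sub_apply_zero_of_even (contDiff_leapfrogNonlinearity lam t₀
    (hv.of_le (by norm_num))) (leapfrogNonlinearity_neg lam v t₀)
  refine (((hD.const_mul_left Complex.I).add (hW.const_mul_left (1 / 4))).sub
    (hN.mono nhdsWithin_le_nhds)).congr' ?_ EventuallyEq.rfl
  filter_upwards [self_mem_nhdsWithin] with τ (hτ : 0 < τ)
  have hτ' : (τ : ℂ) ≠ 0 := by exact_mod_cast hτ.ne'
  have hpde₀ := hpde t₀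
  rw [leapfrogNonlinearity_zero]
  simp only [leapfrogNonlinearity, Complex.real_smul]
  push_cast at hpde₀ ⊢
  field_simp
  linear_combination (-64 * τ : ℂ) * hpde₀
end

section
/- Let k, ω̃, τ, λ ∈ ℝ with τ > 0, and for n ∈ ℤ define uₙ : ℝ → ℂ by uₙ(x) = exp(i·(k·x − ω̃·n·τ)). Suppose that for all n ∈ ℤ and x ∈ ℝ the modified Crank–Nicolson scheme holds: (i/τ)·(u_{n+1}(x) − uₙ(x)) = −(1/2)·(Δu_{n+1}(x) + Δuₙ(x)) + (λ/4)·(|uₙ(x)|² + |u_{n+1}(x)|²)·(u_{n+1}(x) + uₙ(x)). If moreover |ω̃·τ| < π, then ω̃ = (2/τ)·arctan((k² + λ)·τ/2). -/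
/-!
For the plane wave, `Δ` acts as multiplication by `-k²` and `|uₙ| = 1`, so the scheme at
`n = x = 0` reduces to `i (e - 1) = C (e + 1)` with `e = exp(-iωτ)` and `C = (k² + λ)τ/2`.
Multiplying by `exp(iωτ/2)` turns this into `sin(ωτ/2) = C cos(ωτ/2)`, and `|ωτ/2| < π/2`
makes the cosine positive, so `ωτ/2 = arctan C`.
-/
open Complex
open scoped Real

lemma deriv_cexp_mul_add (c d : ℂ) :
    deriv (fun y : ℝ => cexp (c * y + d)) = fun y : ℝ => c * cexp (c * y + d) := by
  funext y
  have h : HasDerivAt (fun y : ℝ => c * y + d) c y := by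
    simpa using ((hasDerivAt_id (y : ℂ)).const_mul c).add_const d |>.comp_ofReal
  simpa [mul_comm] using h.cexp.deriv

lemma deriv_deriv_cexp_mul_add (c d : ℂ) :
    deriv (deriv fun y : ℝ => cexp (c * y + d)) = fun y : ℝ => c ^ 2 * cexp (c * y + d) := by
  funext y
  rw [deriv_cexp_mul_add, deriv_const_mul_field', deriv_cexp_mul_add]
  ring

lemma deriv_deriv_cexp_I_mul_ofReal (k b : ℝ) :
    deriv (deriv fun x : ℝ => cexp (I * ((k * x - b : ℝ) : ℂ))) =
      fun x : ℝ => -(k ^ 2 : ℂ) * cexp (I * ((k * x - b : ℝ) : ℂ)) := by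
  have h (x : ℝ) : cexp (I * ((k * x - b : ℝ) : ℂ)) = cexp ((I * k) * x + -(I * b)) := by
    push_cast; ring_nf
  simp only [h, deriv_deriv_cexp_mul_add, mul_pow, I_sq, neg_one_mul]

lemma sin_half_eq_mul_cos_half {θ C : ℝ}
    (h : I * (cexp (-θ * I) - 1) = C * (cexp (-θ * I) + 1)) :
    Real.sin (θ / 2) = C * Real.cos (θ / 2) := by
  set w := cexp (-(θ / 2 : ℝ) * I)
  set w' := cexp ((θ / 2 : ℝ) * I)
  have hsq : cexp (-θ * I) = w ^ 2 := by
    rw [← Complex.exp_nat_mul]; push_cast; ring_nf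
  have hinv : w * w' = 1 := by rw [← Complex.exp_add]; simp
  rw [hsq] at h
  have hsin : Complex.sin (θ / 2 : ℝ) = C * Complex.cos (θ / 2 : ℝ) := by
    rw [Complex.sin, Complex.cos]
    linear_combination (w' / 2) * h - ((I - C) * w / 2) * hinv
  exact_mod_cast hsin

lemma arctan_eq_of_sin_eq_mul_cos {φ C : ℝ} (hφ : |φ| < π / 2)
    (h : Real.sin φ = C * Real.cos φ) : Real.arctan C = φ := by
  obtain ⟨hlo, hhi⟩ := abs_lt.mp hφ
  have hcos : 0 < Real.cos φ := Real.cos_pos_of_mem_Ioo ⟨hlo, hhi⟩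
  have htan : Real.tan φ = C := by
    rw [Real.tan_eq_sin_div_cos, h, mul_div_cancel_right₀ _ hcos.ne']
  rw [← htan, Real.arctan_tan hlo hhi]

/-- Numerical dispersion relation of the modified Crank–Nicolson scheme for the
cubic NLS: if the discrete plane wave `uₙ(x) = exp(i(kx − ω̃nτ))` satisfies the
scheme and `|ω̃τ| < π`, then `ω̃ = (2/τ)·arctan((k² + λ)τ/2)`. -/
theorem crank_nicolson_dispersion_relation
    (k ω τ lam : ℝ) (hτ : 0 < τ)
    (u : ℤ → ℝ → ℂ)
    (hu : ∀ n : ℤ, ∀ x : ℝ, u n x = Complex.exp (Complex.I * ((k*x - ω*n*τ : ℝ) : ℂ)))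
    (hscheme : ∀ n : ℤ, ∀ x : ℝ,
      (Complex.I / (τ : ℂ)) * (u (n+1) x - u n x) =
        -(1/2 : ℂ) * (deriv (deriv (u (n+1))) x + deriv (deriv (u n)) x)
        + ((lam : ℂ)/4) *
            (((‖u n x‖^2 + ‖u (n+1) x‖^2 : ℝ)) : ℂ)
            * (u (n+1) x + u n x))
    (hω : |ω * τ| < Real.pi) :
    ω = (2/τ) * Real.arctan ((k^2 + lam) * τ / 2) := by
  have hΔ (n : ℤ) (x : ℝ) : deriv (deriv (u n)) x = -(k ^ 2 : ℂ) * u n x := by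
    simp only [funext (hu n), deriv_deriv_cexp_I_mul_ofReal]
  have hnorm (n : ℤ) : ‖u n 0‖ = 1 := by
    rw [hu]; exact norm_exp_I_mul_ofReal _
  have hu₀ : u 0 0 = 1 := by simp [hu]
  have hu₁ : u 1 0 = cexp (-(ω * τ : ℝ) * I) := by
    rw [hu]; congr 1; push_cast; ring
  have hstep := hscheme 0 0
  rw [zero_add, hΔ, hΔ, hnorm, hnorm, hu₀, hu₁] at hstep
  set e := cexp (-(ω * τ : ℝ) * I)
  have hcayley : I * (e - 1) = ((k ^ 2 + lam) * τ / 2 : ℝ) * (e + 1) := by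
    have hτ' : (τ : ℂ) ≠ 0 := by exact_mod_cast hτ.ne'
    field_simp at hstep
    push_cast at hstep ⊢
    linear_combination hstep / 8
  have hhalf : |ω * τ / 2| < π / 2 := by rw [abs_div, abs_two]; linarith
  rw [arctan_eq_of_sin_eq_mul_cos hhalf (sin_half_eq_mul_cos_half hcayley)]
  field_simp
end

section
/- Let k, ω̃, τ, λ ∈ ℝ with τ > 0, and for n ∈ ℤ define uₙ : ℝ → ℂ by uₙ(x) = exp(i·(k·x − ω̃·n·τ)) and Rₙ(x) = (3·uₙ(x) − u_{n−1}(x))/2. Suppose that for all n ∈ ℤ and x ∈ ℝ the modified BDF2 scheme holds: (i/τ)·(R_{n+1}(x) − Rₙ(x)) = −(1/2)·(ΔR_{n+1}(x) + ΔRₙ(x)) + (λ/4)·(|Rₙ(x)|² + |R_{n+1}(x)|²)·(R_{n+1}(x) + Rₙ(x)). Then (2/τ)·sin(ω̃·τ/2) = ( k² + (λ/2)·(5 − 3·cos(ω̃·τ)) )·cos(ω̃·τ/2). -/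
/-!
Restricted to the plane wave, `Rₙ(x) = c e^{-iω̃nτ} e^{ikx}` with `c = (3 - e^{iω̃τ})/2`, so
`ΔRₙ = -k²Rₙ` and `|Rₙ|² = |c|² = (5 - 3cos(ω̃τ))/2` is constant. After dividing by `c ≠ 0`,
the scheme becomes the Crank–Nicolson step `(i/τ)(E - 1) = (K/2)(E + 1)` for `E = e^{-iω̃τ}` and
`K = k² + λ|c|²`; factoring `e^{-iω̃τ/2}` out of `E ± 1` gives the half-angle relation.
-/

open Complex

lemma hasDerivAt_const_mul_exp_I_mul (a : ℂ) (k x : ℝ) :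
    HasDerivAt (fun x : ℝ => a * exp (I * k * x)) (I * k * (a * exp (I * k * x))) x := by
  have h : HasDerivAt (fun z : ℂ => exp (I * k * z)) (exp (I * k * x) * (I * k)) x := by
    simpa using ((hasDerivAt_id (x : ℂ)).const_mul (I * k)).cexp
  exact (h.comp_ofReal.const_mul a).congr_deriv (by ring)

lemma deriv_deriv_const_mul_exp_I_mul (a : ℂ) (k x : ℝ) :
    deriv (deriv fun x : ℝ => a * exp (I * k * x)) x = -k ^ 2 * (a * exp (I * k * x)) := by
  have h : deriv (fun x : ℝ => a * exp (I * k * x)) = fun x : ℝ => I * k * a * exp (I * k * x) :=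
    funext fun x => (hasDerivAt_const_mul_exp_I_mul a k x).deriv.trans (by ring)
  rw [h, (hasDerivAt_const_mul_exp_I_mul _ k x).deriv]
  linear_combination ((k : ℂ) ^ 2 * a * exp (I * k * x)) * I_sq

lemma norm_ofReal_sub_exp_mul_I_sq (a θ : ℝ) :
    ‖(a : ℂ) - exp (θ * I)‖ ^ 2 = a ^ 2 - 2 * a * Real.cos θ + 1 := by
  rw [exp_mul_I, ← ofReal_cos, ← ofReal_sin, Complex.sq_norm,
    show (a : ℂ) - (Real.cos θ + Real.sin θ * I)
        = ((a - Real.cos θ : ℝ) : ℂ) + ((-Real.sin θ : ℝ) : ℂ) * I by push_cast; ring,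
    normSq_add_mul_I]
  linear_combination Real.sin_sq_add_cos_sq θ

lemma exp_neg_mul_I_sub_one_and_add_one (θ : ℝ) :
    exp (-θ * I) - 1 = -2 * I * Real.sin (θ / 2) * exp (-(θ / 2) * I) ∧
    exp (-θ * I) + 1 = 2 * Real.cos (θ / 2) * exp (-(θ / 2) * I) := by
  have hsq : exp (-θ * I) = exp (-(θ / 2) * I) ^ 2 := by rw [sq, ← exp_add]; ring_nf
  have hinv : exp (θ / 2 * I) * exp (-(θ / 2) * I) = 1 := by
    rw [← exp_add, ← exp_zero]; ring_nf
  rw [ofReal_sin, ofReal_cos, sin, cos]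
  push_cast
  constructor
  · linear_combination hsq + hinv
      + (exp (-(θ / 2) * I) ^ 2 - exp (-(θ / 2) * I) * exp (θ / 2 * I)) * I_sq
  · linear_combination hsq - hinv

theorem crankNicolson_dispersion (τ θ K : ℝ)
    (h : I / τ * (exp (-θ * I) - 1) = K / 2 * (exp (-θ * I) + 1)) :
    2 / τ * Real.sin (θ / 2) = K * Real.cos (θ / 2) := by
  obtain ⟨hsub, hadd⟩ := exp_neg_mul_I_sub_one_and_add_one θ
  rw [hsub, hadd] at h
  have h' : (2 / τ * Real.sin (θ / 2) : ℂ) * exp (-(θ / 2) * I)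
      = (K * Real.cos (θ / 2) : ℂ) * exp (-(θ / 2) * I) := by
    linear_combination h + 2 * Real.sin (θ / 2) / τ * exp (-(θ / 2) * I) * I_sq
  exact_mod_cast mul_right_cancel₀ (exp_ne_zero _) h'

lemma bdf2_aux_eq_planeWave {k ω τ : ℝ} {u R : ℤ → ℝ → ℂ}
    (hu : ∀ n : ℤ, ∀ x : ℝ, u n x = Complex.exp (Complex.I * ((k*x - ω*n*τ : ℝ) : ℂ)))
    (hR : ∀ n : ℤ, ∀ x : ℝ, R n x = (3 * u n x - u (n-1) x) / 2) (n : ℤ) :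
    R n = fun x : ℝ => (3 - exp (ω * τ * I)) / 2 * exp (-(ω * n * τ) * I) * exp (I * k * x) := by
  funext x
  have hn : exp (I * ((k*x - ω*n*τ : ℝ) : ℂ)) = exp (-(ω * n * τ) * I) * exp (I * k * x) := by
    rw [← exp_add]; push_cast; ring_nf
  have hn1 : exp (I * ((k*x - ω*(n-1 : ℤ)*τ : ℝ) : ℂ))
      = exp (ω * τ * I) * exp (-(ω * n * τ) * I) * exp (I * k * x) := by
    rw [← exp_add, ← exp_add]; push_cast; ring_nf
  rw [hR, hu, hu, hn, hn1]
  ring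

theorem modified_bdf2_dispersion_relation_general
    (k ω τ lam : ℝ)
    (u : ℤ → ℝ → ℂ) (R : ℤ → ℝ → ℂ)
    (hu : ∀ n : ℤ, ∀ x : ℝ, u n x = Complex.exp (Complex.I * ((k*x - ω*n*τ : ℝ) : ℂ)))
    (hR : ∀ n : ℤ, ∀ x : ℝ, R n x = (3 * u n x - u (n-1) x) / 2)
    (hscheme : ∀ n : ℤ, ∀ x : ℝ,
      (Complex.I / (τ : ℂ)) * (R (n+1) x - R n x) =
        -(1/2 : ℂ) * (deriv (deriv (R (n+1))) x + deriv (deriv (R n)) x)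
        + ((lam : ℂ)/4) *
            (((‖R n x‖^2 + ‖R (n+1) x‖^2 : ℝ)) : ℂ)
            * (R (n+1) x + R n x)) :
    (2/τ) * Real.sin (ω * τ / 2)
      = (k^2 + (lam/2) * (5 - 3 * Real.cos (ω * τ))) * Real.cos (ω * τ / 2) := by
  have hRn := bdf2_aux_eq_planeWave hu hR
  set c : ℂ := (3 - exp (ω * τ * I)) / 2 with hc_def
  have hderiv (n : ℤ) (x : ℝ) : deriv (deriv (R n)) x = -k ^ 2 * R n x := by
    rw [hRn n]; exact deriv_deriv_const_mul_exp_I_mul _ k x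
  have hnorm_c : ‖c‖ ^ 2 = (5 - 3 * Real.cos (ω * τ)) / 2 := by
    have h := norm_ofReal_sub_exp_mul_I_sq 3 (ω * τ)
    push_cast at h
    rw [hc_def, norm_div, div_pow, h]
    norm_num; ring
  have hnorm (n : ℤ) (x : ℝ) : ‖R n x‖ ^ 2 = (5 - 3 * Real.cos (ω * τ)) / 2 := by
    rw [hRn n]
    simp [norm_exp, hnorm_c]
  have hc : c ≠ 0 := by
    intro h
    rw [h, norm_zero] at hnorm_c
    nlinarith [Real.cos_le_one (ω * τ)]
  have hR0 : R 0 0 = c := by simp [hRn]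
  have hR1 : R (0 + 1) 0 = c * exp (-((ω * τ : ℝ) : ℂ) * I) := by simp [hRn]
  have hsch := hscheme 0 0
  rw [hderiv, hderiv, hnorm, hnorm, hR0, hR1] at hsch
  have hCN : I / τ * (exp (-((ω * τ : ℝ) : ℂ) * I) - 1)
      = ((k ^ 2 + lam / 2 * (5 - 3 * Real.cos (ω * τ)) : ℝ) : ℂ) / 2
        * (exp (-((ω * τ : ℝ) : ℂ) * I) + 1) := by
    apply mul_left_cancel₀ hc
    push_cast at hsch ⊢
    linear_combination hsch
  simpa [mul_div_assoc] using crankNicolson_dispersion τ (ω * τ) _ hCN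

/-- Numerical dispersion relation of the modified BDF2 scheme for the cubic NLS:
if the discrete plane wave `uₙ(x) = exp(i(kx − ω̃nτ))` with auxiliary variable
`Rₙ = (3uₙ − u_{n−1})/2` satisfies the scheme, then
`(2/τ)sin(ω̃τ/2) = (k² + (λ/2)(5 − 3cos(ω̃τ)))cos(ω̃τ/2)`. -/
theorem modified_bdf2_dispersion_relation
    (k ω τ lam : ℝ) (hτ : 0 < τ)
    (u : ℤ → ℝ → ℂ) (R : ℤ → ℝ → ℂ)
    (hu : ∀ n : ℤ, ∀ x : ℝ, u n x = Complex.exp (Complex.I * ((k*x - ω*n*τ : ℝ) : ℂ)))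
    (hR : ∀ n : ℤ, ∀ x : ℝ, R n x = (3 * u n x - u (n-1) x) / 2)
    (hscheme : ∀ n : ℤ, ∀ x : ℝ,
      (Complex.I / (τ : ℂ)) * (R (n+1) x - R n x) =
        -(1/2 : ℂ) * (deriv (deriv (R (n+1))) x + deriv (deriv (R n)) x)
        + ((lam : ℂ)/4) *
            (((‖R n x‖^2 + ‖R (n+1) x‖^2 : ℝ)) : ℂ)
            * (R (n+1) x + R n x)) :
    (2/τ) * Real.sin (ω * τ / 2)
      = (k^2 + (lam/2) * (5 - 3 * Real.cos (ω * τ))) * Real.cos (ω * τ / 2) :=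
  modified_bdf2_dispersion_relation_general k ω τ lam u R hu hR hscheme
end
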